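/- Let (A,e) be a J(α)-algebra (α ≠ 0,1) satisfying the Martindale-like conditions (i)–(iii). Then for each pair i ≠ j in {1,0,α}, the set F_i of operators defined below annihilates A_j, and for a_i ∈ A_i, F_i a_i = 0 implies a_i = 0. Here, for a fixed positive integer r, let L₀ be the set of operators L_{t₁}···L_{t_r} with all t_k ∈ A₀, L₁ = {L_e^r}, L_α the set of L_e^{r−1}L_t with t ∈ A_α, and set F_α = L₀L₁, F₁ = F_αL_αL₁, F₀ = F_αL_αL₀ (sets of compositions). -/
import Mathlib


/-- Composite of left multiplications: `Lmul [t₁,…,t_r] x = t₁ * (t₂ * (⋯ * (t_r * x)))`. -/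
def Lmul {A : Type*} [Mul A] (ts : List A) (x : A) : A := ts.foldr (· * ·) x

/-- The `lam`-eigenspace (as a set) of left multiplication by `e`. -/
def eigSet {F A : Type*} [Field F] [NonUnitalNonAssocCommRing A] [Module F A]
    (e : A) (lam : F) : Set A := {x | e * x = lam • x}

/-- `(A, e)` is a `J(α)`-algebra: `e` is idempotent, `α ≠ 0, 1`, `A` decomposes as the sum
of the `1`-, `0`- and `α`-eigenspaces of `L_e`, and the Jordan-type fusion law holds. -/
structure IsJAlg {F A : Type*} [Field F] [NonUnitalNonAssocCommRing A] [Module F A]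
    (e : A) (α : F) : Prop where
  idem : e * e = e
  hα0 : α ≠ 0
  hα1 : α ≠ 1
  decomp : ∀ x : A, ∃ x1 ∈ eigSet e (1 : F), ∃ x0 ∈ eigSet e (0 : F), ∃ xa ∈ eigSet e α,
    x = x1 + x0 + xa
  f11 : ∀ x ∈ eigSet e (1 : F), ∀ y ∈ eigSet e (1 : F), x * y ∈ eigSet e (1 : F)
  f10 : ∀ x ∈ eigSet e (1 : F), ∀ y ∈ eigSet e (0 : F), x * y = 0
  f1a : ∀ x ∈ eigSet e (1 : F), ∀ y ∈ eigSet e α, x * y ∈ eigSet e α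
  f00 : ∀ x ∈ eigSet e (0 : F), ∀ y ∈ eigSet e (0 : F), x * y ∈ eigSet e (0 : F)
  f0a : ∀ x ∈ eigSet e (0 : F), ∀ y ∈ eigSet e α, x * y ∈ eigSet e α
  faa : ∀ x ∈ eigSet e α, ∀ y ∈ eigSet e α, ∃ z1 ∈ eigSet e (1 : F), ∃ z0 ∈ eigSet e (0 : F),
    x * y = z1 + z0

/-- Martindale-like conditions (i)–(iii) for a `J(α)`-algebra. -/
def MartindaleJ {F A : Type*} [Field F] [NonUnitalNonAssocCommRing A] [Module F A]
    (e : A) (α : F) : Prop :=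
  (∀ a ∈ eigSet e (1 : F), (∀ t ∈ eigSet e α, t * a = 0) → a = 0) ∧
  (∀ a ∈ eigSet e (0 : F), (∀ t ∈ eigSet e α, t * a = 0) → a = 0) ∧
  (∀ a ∈ eigSet e (0 : F), (∀ t ∈ eigSet e (0 : F), t * a = 0) → a = 0) ∧
  (∀ a ∈ eigSet e α, (∀ t ∈ eigSet e (0 : F), t * a = 0) → a = 0)

/-- Composition of two sets of operators: apply an element of `T` first, then `S`. -/
def setComp {A : Type*} (S T : Set (A → A)) : Set (A → A) :=
  {h | ∃ g ∈ S, ∃ f ∈ T, h = g ∘ f}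

/-- `𝓛₀`: operators `L_{t₁} ⋯ L_{t_r}` with all `tᵢ ∈ A₀`. -/
def L0set {F A : Type*} [Field F] [NonUnitalNonAssocCommRing A] [Module F A]
    (e : A) (r : ℕ) : Set (A → A) :=
  {L | ∃ ts : List A, ts.length = r ∧ (∀ t ∈ ts, t ∈ eigSet e (0 : F)) ∧ L = Lmul ts}

/-- `𝓛₁ = {L_e^r}`. -/
def L1set {A : Type*} [Mul A] (e : A) (r : ℕ) : Set (A → A) :=
  {Lmul (List.replicate r e)}

/-- `𝓛_λ`: operators `L_e^{r-1} L_t` with `t ∈ A_λ`. -/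
def Llamset {F A : Type*} [Field F] [NonUnitalNonAssocCommRing A] [Module F A]
    (e : A) (lam : F) (r : ℕ) : Set (A → A) :=
  {L | ∃ t ∈ eigSet e lam, L = Lmul (List.replicate (r - 1) e ++ [t])}

/-- `𝓕_α = 𝓛₀𝓛₁`. -/
def FaJ {F A : Type*} [Field F] [NonUnitalNonAssocCommRing A] [Module F A]
    (e : A) (α : F) (r : ℕ) : Set (A → A) :=
  setComp (L0set (F := F) e r) (L1set e r)

/-- `𝓕₁ = 𝓕_α𝓛_α𝓛₁`. -/
def F1J {F A : Type*} [Field F] [NonUnitalNonAssocCommRing A] [Module F A]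
    (e : A) (α : F) (r : ℕ) : Set (A → A) :=
  setComp (setComp (FaJ e α r) (Llamset e α r)) (L1set e r)

/-- `𝓕₀ = 𝓕_α𝓛_α𝓛₀`. -/
def F0J {F A : Type*} [Field F] [NonUnitalNonAssocCommRing A] [Module F A]
    (e : A) (α : F) (r : ℕ) : Set (A → A) :=
  setComp (setComp (FaJ e α r) (Llamset e α r)) (L0set (F := F) e r)

section Helpers2
variable {F A : Type*} [Field F] [NonUnitalNonAssocCommRing A] [Module F A]

lemma smul_cancel0 {c : F} (hc : c ≠ 0) {x : A} (hx : c • x = 0) : x = 0 := by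
  have := congrArg (c⁻¹ • ·) hx
  simpa [inv_smul_smul₀ hc] using this

end Helpers2
section Helpers

variable {F A : Type*} [Field F] [NonUnitalNonAssocCommRing A] [Module F A]
    [SMulCommClass F A A] [IsScalarTower F A A]

lemma Lmul_nil (x : A) : Lmul ([] : List A) x = x := rfl

lemma Lmul_cons (t : A) (ts : List A) (x : A) : Lmul (t :: ts) x = t * Lmul ts x := rfl

lemma Lmul_append (ts us : List A) (x : A) : Lmul (ts ++ us) x = Lmul ts (Lmul us x) := by
  simp [Lmul, List.foldr_append]

lemma Lmul_zero (ts : List A) : Lmul ts (0 : A) = 0 := by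
  induction ts with
  | nil => rfl
  | cons t ts ih => rw [Lmul_cons, ih, mul_zero]

lemma Lmul_add (ts : List A) (x y : A) : Lmul ts (x + y) = Lmul ts x + Lmul ts y := by
  induction ts with
  | nil => rfl
  | cons t ts ih => rw [Lmul_cons, Lmul_cons, Lmul_cons, ih, mul_add]

lemma Lmul_smul (ts : List A) (c : F) (x : A) : Lmul ts (c • x) = c • Lmul ts x := by
  induction ts with
  | nil => rfl
  | cons t ts ih => rw [Lmul_cons, Lmul_cons, ih, mul_smul_comm]

lemma zero_mem_eig (e : A) (lam : F) : (0 : A) ∈ eigSet e lam := by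
  simp [eigSet]

lemma eig_smul {e : A} {lam : F} (c : F) {x : A} (hx : x ∈ eigSet e lam) :
    c • x ∈ eigSet e lam := by
  show e * (c • x) = lam • (c • x)
  rw [mul_smul_comm, hx, smul_smul, smul_smul, mul_comm]

lemma Lmul_rep_eig {e : A} {lam : F} (k : ℕ) {x : A} (hx : x ∈ eigSet e lam) :
    Lmul (List.replicate k e) x = lam ^ k • x := by
  induction k with
  | zero => simp [Lmul_nil]
  | succ k ih =>
      rw [List.replicate_succ, Lmul_cons, ih, mul_smul_comm, hx, smul_smul, pow_succ]

lemma chain0_eiga {e : A} {α : F} (h : IsJAlg e α) :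
    ∀ ts : List A, (∀ t ∈ ts, t ∈ eigSet e (0 : F)) → ∀ {x : A}, x ∈ eigSet e α →
      Lmul ts x ∈ eigSet e α := by
  intro ts hts x hx
  induction ts with
  | nil => exact hx
  | cons t ts ih =>
      rw [Lmul_cons]
      exact h.f0a t (hts t (by simp)) _ (ih fun s hs => hts s (by simp [hs]))

lemma chain0_eig0 {e : A} {α : F} (h : IsJAlg e α) :
    ∀ ts : List A, (∀ t ∈ ts, t ∈ eigSet e (0 : F)) → ∀ {x : A}, x ∈ eigSet e (0 : F) →
      Lmul ts x ∈ eigSet e (0 : F) := by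
  intro ts hts x hx
  induction ts with
  | nil => exact hx
  | cons t ts ih =>
      rw [Lmul_cons]
      exact h.f00 t (hts t (by simp)) _ (ih fun s hs => hts s (by simp [hs]))

lemma chain0_kill1 {e : A} {α : F} (h : IsJAlg e α) :
    ∀ ts : List A, ts ≠ [] → (∀ t ∈ ts, t ∈ eigSet e (0 : F)) → ∀ {x : A},
      x ∈ eigSet e (1 : F) → Lmul ts x = 0 := by
  intro ts hne hts x hx
  induction ts with
  | nil => exact absurd rfl hne
  | cons t ts ih =>
      rw [Lmul_cons]
      rcases ts with _ | ⟨s, ts⟩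
      · rw [Lmul_nil, mul_comm]
        exact h.f10 x hx t (hts t (by simp))
      · rw [ih (by simp) (fun s hs => hts s (by simp [hs])), mul_zero]

lemma sep_alpha {e : A} {α : F} (h : IsJAlg e α) (hm : MartindaleJ e α) :
    ∀ k : ℕ, ∀ b ∈ eigSet e α,
      (∀ ts : List A, ts.length = k → (∀ t ∈ ts, t ∈ eigSet e (0 : F)) → Lmul ts b = 0) →
      b = 0 := by
  intro k
  induction k with
  | zero => intro b _ H; simpa [Lmul_nil] using H [] rfl (by simp)
  | succ k ih =>
      intro b hb H
      refine hm.2.2.2 b hb fun s hs => ?_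
      refine ih (s * b) (h.f0a s hs b hb) fun ts hlen hts => ?_
      have := H (ts ++ [s]) (by simp [hlen]) (by
        intro t ht
        rcases List.mem_append.mp ht with ht | ht
        · exact hts t ht
        · simpa using (List.mem_singleton.mp ht) ▸ hs)
      rwa [Lmul_append] at this

lemma sep_zero {e : A} {α : F} (h : IsJAlg e α) (hm : MartindaleJ e α) :
    ∀ k : ℕ, ∀ b ∈ eigSet e (0 : F),
      (∀ ts : List A, ts.length = k → (∀ t ∈ ts, t ∈ eigSet e (0 : F)) → Lmul ts b = 0) →
      b = 0 := by
  intro k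
  induction k with
  | zero => intro b _ H; simpa [Lmul_nil] using H [] rfl (by simp)
  | succ k ih =>
      intro b hb H
      refine hm.2.2.1 b hb fun s hs => ?_
      refine ih (s * b) (h.f00 s hs b hb) fun ts hlen hts => ?_
      have := H (ts ++ [s]) (by simp [hlen]) (by
        intro t ht
        rcases List.mem_append.mp ht with ht | ht
        · exact hts t ht
        · simpa using (List.mem_singleton.mp ht) ▸ hs)
      rwa [Lmul_append] at this

/-- `𝓕_α` kills `A₁ ⊕ A₀`. -/
lemma key_kill {e : A} {α : F} (h : IsJAlg e α) {r : ℕ} (hr : 1 ≤ r)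
    (ts : List A) (hlen : ts.length = r) (hts : ∀ t ∈ ts, t ∈ eigSet e (0 : F))
    {z1 z0 : A} (h1 : z1 ∈ eigSet e (1 : F)) (h0 : z0 ∈ eigSet e (0 : F)) :
    Lmul ts (Lmul (List.replicate r e) (z1 + z0)) = 0 := by
  have hne : ts ≠ [] := List.ne_nil_of_length_pos (by omega)
  rw [Lmul_add, Lmul_rep_eig r h1, Lmul_rep_eig r h0, one_pow, one_smul,
    zero_pow (by omega : r ≠ 0), zero_smul, add_zero]
  exact chain0_kill1 h ts hne hts h1

lemma key2 {e : A} {α : F} (h : IsJAlg e α) {r : ℕ} (hr : 1 ≤ r)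
    (ts : List A) (hlen : ts.length = r) (hts : ∀ t ∈ ts, t ∈ eigSet e (0 : F))
    {t b : A} (ht : t ∈ eigSet e α) (hb : b ∈ eigSet e α) :
    Lmul ts (Lmul (List.replicate r e) (Lmul (List.replicate (r - 1) e ++ [t]) b)) = 0 := by
  rw [Lmul_append]
  have : Lmul [t] b = t * b := rfl
  rw [this]
  obtain ⟨z1, h1, z0, h0, hz⟩ := h.faa t ht b hb
  rw [hz, Lmul_add, Lmul_rep_eig _ h1, Lmul_rep_eig _ h0, one_pow, one_smul]
  have h0' : ((0:F) ^ (r-1)) • z0 ∈ eigSet e (0 : F) := eig_smul _ h0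
  exact key_kill h hr ts hlen hts h1 h0'

end Helpers
/-- Lemma 4.1: for `i ≠ j` in `{1, 0, α}`, `𝓕_i A_j = 0`, and `𝓕_i`
separates points of `A_i`. -/
theorem jalg_operator_families {F A : Type*} [Field F] [NonUnitalNonAssocCommRing A]
    [Module F A] [SMulCommClass F A A] [IsScalarTower F A A]
    (e : A) (α : F) (h : IsJAlg e α) (hm : MartindaleJ e α) (r : ℕ) (hr : 1 ≤ r) :
    (∀ L ∈ FaJ e α r, ∀ a ∈ eigSet e (1 : F), L a = 0) ∧
    (∀ L ∈ FaJ e α r, ∀ a ∈ eigSet e (0 : F), L a = 0) ∧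
    (∀ L ∈ F1J e α r, ∀ a ∈ eigSet e (0 : F), L a = 0) ∧
    (∀ L ∈ F1J e α r, ∀ a ∈ eigSet e α, L a = 0) ∧
    (∀ L ∈ F0J e α r, ∀ a ∈ eigSet e (1 : F), L a = 0) ∧
    (∀ L ∈ F0J e α r, ∀ a ∈ eigSet e α, L a = 0) ∧
    (∀ a ∈ eigSet e (1 : F), (∀ L ∈ F1J e α r, L a = 0) → a = 0) ∧
    (∀ a ∈ eigSet e (0 : F), (∀ L ∈ F0J e α r, L a = 0) → a = 0) ∧
    (∀ a ∈ eigSet e α, (∀ L ∈ FaJ e α r, L a = 0) → a = 0) := by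

  obtain ⟨hm1, hm2, hm3, hm4⟩ := hm
  have hmm : MartindaleJ e α := ⟨hm1, hm2, hm3, hm4⟩
  have hrne : r ≠ 0 := by omega
  refine ⟨?_, ?_, ?_, ?_, ?_, ?_, ?_, ?_, ?_⟩
  · -- 𝓕_α kills A₁
    rintro L ⟨g, ⟨ts, hlen, hts, rfl⟩, f, hf, rfl⟩ a ha
    have hf' : f = Lmul (List.replicate r e) := hf
    subst hf'
    simpa using key_kill h hr ts hlen hts ha (zero_mem_eig e 0)
  · -- 𝓕_α kills A₀
    rintro L ⟨g, ⟨ts, hlen, hts, rfl⟩, f, hf, rfl⟩ a ha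
    have hf' : f = Lmul (List.replicate r e) := hf
    subst hf'
    simpa using key_kill h hr ts hlen hts (zero_mem_eig e 1) ha
  · -- 𝓕₁ kills A₀
    rintro L ⟨g, ⟨g1, ⟨p, ⟨ts, hlen, hts, rfl⟩, q, hq, rfl⟩, g2, ⟨t, ht, rfl⟩, rfl⟩,
      f, hf, rfl⟩ a ha
    have hq' : q = Lmul (List.replicate r e) := hq
    have hf' : f = Lmul (List.replicate r e) := hf
    subst hq'; subst hf'
    simp only [Function.comp_apply]
    rw [Lmul_rep_eig r ha, zero_pow hrne, zero_smul, Lmul_zero, Lmul_zero, Lmul_zero]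
  · -- 𝓕₁ kills A_α
    rintro L ⟨g, ⟨g1, ⟨p, ⟨ts, hlen, hts, rfl⟩, q, hq, rfl⟩, g2, ⟨t, ht, rfl⟩, rfl⟩,
      f, hf, rfl⟩ a ha
    have hq' : q = Lmul (List.replicate r e) := hq
    have hf' : f = Lmul (List.replicate r e) := hf
    subst hq'; subst hf'
    simp only [Function.comp_apply]
    rw [Lmul_rep_eig r ha]
    exact key2 h hr ts hlen hts ht (eig_smul _ ha)
  · -- 𝓕₀ kills A₁
    rintro L ⟨g, ⟨g1, ⟨p, ⟨ts, hlen, hts, rfl⟩, q, hq, rfl⟩, g2, ⟨t, ht, rfl⟩, rfl⟩,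
      f, ⟨us, hulen, huts, rfl⟩, rfl⟩ a ha
    have hq' : q = Lmul (List.replicate r e) := hq
    subst hq'
    simp only [Function.comp_apply]
    rw [chain0_kill1 h us (List.ne_nil_of_length_pos (by omega)) huts ha,
      Lmul_zero, Lmul_zero, Lmul_zero]
  · -- 𝓕₀ kills A_α
    rintro L ⟨g, ⟨g1, ⟨p, ⟨ts, hlen, hts, rfl⟩, q, hq, rfl⟩, g2, ⟨t, ht, rfl⟩, rfl⟩,
      f, ⟨us, hulen, huts, rfl⟩, rfl⟩ a ha
    have hq' : q = Lmul (List.replicate r e) := hq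
    subst hq'
    simp only [Function.comp_apply]
    exact key2 h hr ts hlen hts ht (chain0_eiga h us huts ha)
  · -- 𝓕₁ separates A₁
    intro a ha H
    refine hm1 a ha fun t ht => ?_
    have hb : t * a ∈ eigSet e α := by rw [mul_comm]; exact h.f1a a ha t ht
    refine sep_alpha h hmm r (t * a) hb fun ts hlen hts => ?_
    have hL := H (((Lmul ts ∘ Lmul (List.replicate r e)) ∘
        Lmul (List.replicate (r - 1) e ++ [t])) ∘ Lmul (List.replicate r e))
      ⟨Lmul ts ∘ Lmul (List.replicate r e) ∘ Lmul (List.replicate (r - 1) e ++ [t]),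
        ⟨Lmul ts ∘ Lmul (List.replicate r e), ⟨Lmul ts, ⟨ts, hlen, hts, rfl⟩,
          Lmul (List.replicate r e), rfl, rfl⟩,
         Lmul (List.replicate (r - 1) e ++ [t]), ⟨t, ht, rfl⟩, rfl⟩,
       Lmul (List.replicate r e), rfl, rfl⟩
    simp only [Function.comp_apply] at hL
    rw [Lmul_rep_eig r ha, one_pow, one_smul, Lmul_append] at hL
    have h1 : Lmul [t] a = t * a := rfl
    rw [h1, Lmul_rep_eig (r - 1) hb, Lmul_rep_eig r (eig_smul _ hb),
      Lmul_smul, Lmul_smul] at hL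
    exact smul_cancel0 (pow_ne_zero (r - 1) h.hα0)
      (smul_cancel0 (pow_ne_zero r h.hα0) hL)
  · -- 𝓕₀ separates A₀
    intro a ha H
    refine sep_zero h hmm r a ha fun us hulen huts => ?_
    have hc0 : Lmul us a ∈ eigSet e (0 : F) := chain0_eig0 h us huts ha
    refine hm2 (Lmul us a) hc0 fun t ht => ?_
    have hb : t * Lmul us a ∈ eigSet e α := by
      rw [mul_comm]; exact h.f0a (Lmul us a) hc0 t ht
    refine sep_alpha h hmm r _ hb fun ts hlen hts => ?_
    have hL := H (((Lmul ts ∘ Lmul (List.replicate r e)) ∘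
        Lmul (List.replicate (r - 1) e ++ [t])) ∘ Lmul us)
      ⟨Lmul ts ∘ Lmul (List.replicate r e) ∘ Lmul (List.replicate (r - 1) e ++ [t]),
        ⟨Lmul ts ∘ Lmul (List.replicate r e), ⟨Lmul ts, ⟨ts, hlen, hts, rfl⟩,
          Lmul (List.replicate r e), rfl, rfl⟩,
         Lmul (List.replicate (r - 1) e ++ [t]), ⟨t, ht, rfl⟩, rfl⟩,
       Lmul us, ⟨us, hulen, huts, rfl⟩, rfl⟩
    simp only [Function.comp_apply] at hL
    rw [Lmul_append] at hL
    have h1 : Lmul [t] (Lmul us a) = t * Lmul us a := rfl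
    rw [h1, Lmul_rep_eig (r - 1) hb, Lmul_rep_eig r (eig_smul _ hb),
      Lmul_smul, Lmul_smul] at hL
    exact smul_cancel0 (pow_ne_zero (r - 1) h.hα0)
      (smul_cancel0 (pow_ne_zero r h.hα0) hL)
  · -- 𝓕_α separates A_α
    intro a ha H
    refine sep_alpha h hmm r a ha fun ts hlen hts => ?_
    have hL := H (Lmul ts ∘ Lmul (List.replicate r e))
      ⟨Lmul ts, ⟨ts, hlen, hts, rfl⟩, Lmul (List.replicate r e), rfl, rfl⟩
    simp only [Function.comp_apply] at hL
    rw [Lmul_rep_eig r ha, Lmul_smul] at hL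
    exact smul_cancel0 (pow_ne_zero r h.hα0) hL
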